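/- The second complex derivative of G_V at ψ_V equals 0, and the third complex derivative of G_V at ψ_V equals 2·(√(κη) − 1)^5/(q³·(κ−1)³·(κ − √(κη))·√(κη)), which moreover equals 2·(f_{η,V}/ψ_V)³. -/

import Mathlib

/-!
Since `κ⁻¹ z + q = κ⁻¹ (z + κ q)` with `κ⁻¹ > 0`, on the slit plane `G_V` differs by a constant
from `η Log (z + κ q) - Log (z + q) + m Log z`, whose `(n+1)`-st derivative is
`(-1)ⁿ n! (η (z + κ q)^{-n-1} - (z + q)^{-n-1} + m z^{-n-1})`. With `s = √(κη)` one has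
`ψ_V + κ q = q s (κ - 1)/(s - 1)`, `ψ_V + q = q (κ - 1)/(s - 1)`, `η = s²/κ` and
`m = (κ - s)²/(κ (κ - 1))`, after which both derivative values are rational identities in `s`.
-/

open Complex

namespace Complex

lemma add_ofReal_mem_slitPlane {z : ℂ} (hz : z ∈ slitPlane) {c : ℝ} (hc : 0 ≤ c) :
    z + c ∈ slitPlane := by
  rw [mem_slitPlane_iff] at hz ⊢
  rcases hz with hre | him
  · left
    simp only [add_re, ofReal_re]
    linarith
  · right
    simpa using him

lemma contDiffAt_log_add_const {n : WithTop ℕ∞} {z c : ℂ} (hz : z + c ∈ slitPlane) :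
    ContDiffAt ℂ n (fun w ↦ log (w + c)) z :=
  (contDiffAt_log hz).comp z (contDiffAt_id.add contDiffAt_const)

lemma iteratedDeriv_succ_log_add_const {n : ℕ} {z c : ℂ} (hz : z + c ∈ slitPlane) :
    iteratedDeriv (n + 1) (fun w ↦ log (w + c)) z =
      (-1) ^ n * n.factorial * (z + c) ^ (-(n : ℤ) - 1) := by
  rw [iteratedDeriv_comp_add_const]
  exact iteratedDeriv_succ_log hz

end Complex

noncomputable def logCombination (a b : ℂ) (κ q : ℝ) (z : ℂ) : ℂ :=
  a * log ((κ : ℂ)⁻¹ * z + q) - log (z + q) + b * log z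

theorem iteratedDeriv_succ_logCombination (a b : ℂ) {κ q : ℝ} (hκ : 0 < κ) (hq : 0 ≤ q)
    {z : ℂ} (hz : z ∈ slitPlane) (n : ℕ) :
    iteratedDeriv (n + 1) (logCombination a b κ q) z =
      (-1) ^ n * n.factorial * (a * (z + (κ * q : ℝ)) ^ (-(n : ℤ) - 1)
        - (z + q) ^ (-(n : ℤ) - 1) + b * z ^ (-(n : ℤ) - 1)) := by
  have hκq : z + (κ * q : ℝ) ∈ slitPlane := add_ofReal_mem_slitPlane hz (by positivity)
  have hq' : z + q ∈ slitPlane := add_ofReal_mem_slitPlane hz hq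
  have hsplit : logCombination a b κ q =ᶠ[nhds z]
      fun w ↦ a * Real.log κ⁻¹ + (a * log (w + (κ * q : ℝ)) - log (w + q) + b * log w) := by
    filter_upwards [(continuous_add_const _).continuousAt.preimage_mem_nhds
      (isOpen_slitPlane.mem_nhds hκq)] with w hw
    have hκ' : (κ : ℂ) ≠ 0 := ofReal_ne_zero.2 hκ.ne'
    have hfactor : (κ : ℂ)⁻¹ * w + q = (κ⁻¹ : ℝ) * (w + (κ * q : ℝ)) := by
      push_cast
      field_simp
    rw [logCombination, hfactor, log_ofReal_mul (inv_pos.2 hκ) (slitPlane_ne_zero hw)]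
    ring
  have hdκq := contDiffAt_const (c := a).mul (contDiffAt_log_add_const (n := n + 1) hκq)
  have hdq := contDiffAt_log_add_const (n := n + 1) hq'
  have hdz := contDiffAt_const (c := b).mul (contDiffAt_log (n := n + 1) hz)
  rw [hsplit.iteratedDeriv_eq, iteratedDeriv_const_add n.add_one_pos,
    iteratedDeriv_fun_add (hdκq.sub hdq) hdz, iteratedDeriv_fun_sub hdκq hdq,
    iteratedDeriv_const_mul_field, iteratedDeriv_const_mul_field,
    iteratedDeriv_succ_log_add_const hκq, iteratedDeriv_succ_log_add_const hq',
    iteratedDeriv_succ_log hz]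
  ring

section CriticalPoint

variable {q κ η s m ψ : ℝ}

lemma sqrt_mul_mem_Ioo (hκ : 0 < κ) (hη : η ∈ Set.Ioo κ⁻¹ κ) : √(κ * η) ∈ Set.Ioo 1 κ := by
  obtain ⟨hlo, hhi⟩ := hη
  constructor
  · rw [Real.lt_sqrt zero_le_one, one_pow, ← inv_lt_iff_one_lt_mul₀' hκ]
    exact hlo
  · rw [Real.sqrt_lt' hκ, sq]
    exact mul_lt_mul_of_pos_left hhi hκ

lemma sqrt_sub_sqrt_sq (hκ : 0 < κ) : (√κ - √η) ^ 2 = (κ - √(κ * η)) ^ 2 / κ := by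
  rw [Real.sqrt_mul hκ.le, eq_div_iff hκ.ne']
  linear_combination (κ - √η ^ 2) * Real.sq_sqrt hκ.le

lemma add_mul_eq_of_eq_div (hs : s ≠ 1) (hψ : ψ = q * (κ - s) / (s - 1)) :
    ψ + κ * q = q * s * (κ - 1) / (s - 1) := by
  have : s - 1 ≠ 0 := sub_ne_zero.2 hs
  rw [hψ]
  field_simp
  ring

lemma add_eq_of_eq_div (hs : s ≠ 1) (hψ : ψ = q * (κ - s) / (s - 1)) :
    ψ + q = q * (κ - 1) / (s - 1) := by
  have : s - 1 ≠ 0 := sub_ne_zero.2 hs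
  rw [hψ]
  field_simp
  ring

lemma inv_sq_combination_eq_zero (hq : q ≠ 0) (hs : 1 < s) (hsκ : s < κ)
    (hψ : ψ = q * (κ - s) / (s - 1)) (hη : κ * η = s ^ 2) (hm : m = (κ - s) ^ 2 / (κ * (κ - 1))) :
    η / (ψ + κ * q) ^ 2 - 1 / (ψ + q) ^ 2 + m / ψ ^ 2 = 0 := by
  have : s - 1 ≠ 0 := by linarith
  have : κ - s ≠ 0 := by linarith
  have : κ - 1 ≠ 0 := by linarith
  have hκ : κ ≠ 0 := by linarith
  rw [add_mul_eq_of_eq_div hs.ne' hψ, add_eq_of_eq_div hs.ne' hψ, hψ, hm,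
    eq_div_of_mul_eq hκ (by linarith [hη] : η * κ = s ^ 2)]
  field_simp
  ring

lemma inv_cube_combination_eq (hq : q ≠ 0) (hs : 1 < s) (hsκ : s < κ)
    (hψ : ψ = q * (κ - s) / (s - 1)) (hη : κ * η = s ^ 2) (hm : m = (κ - s) ^ 2 / (κ * (κ - 1))) :
    2 * (η / (ψ + κ * q) ^ 3 - 1 / (ψ + q) ^ 3 + m / ψ ^ 3)
      = 2 * (s - 1) ^ 5 / (q ^ 3 * (κ - 1) ^ 3 * (κ - s) * s) := by
  have : s - 1 ≠ 0 := by linarith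
  have : κ - s ≠ 0 := by linarith
  have : κ - 1 ≠ 0 := by linarith
  have hκ : κ ≠ 0 := by linarith
  have : s ≠ 0 := by linarith
  rw [add_mul_eq_of_eq_div hs.ne' hψ, add_eq_of_eq_div hs.ne' hψ, hψ, hm,
    eq_div_of_mul_eq hκ (by linarith [hη] : η * κ = s ^ 2)]
  field_simp
  ring

lemma rpow_two_thirds_pow_three {x : ℝ} (hx : 0 ≤ x) : (x ^ ((2 : ℝ) / 3)) ^ 3 = x ^ 2 := by
  rw [← Real.rpow_mul_natCast hx]
  norm_num

lemma rpow_one_sixth_pow_three {x : ℝ} (hx : 0 ≤ x) : (x ^ ((1 : ℝ) / 6)) ^ 3 = √x := by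
  rw [← Real.rpow_mul_natCast hx, Real.sqrt_eq_rpow]
  norm_num

lemma two_mul_pow_five_div_eq_two_mul_cube (hq : q ≠ 0) (hs : 1 < s) (hsκ : s < κ)
    (hκ : 0 < κ) (hη : 0 ≤ η) (hsdef : s = √(κ * η)) (hψ : ψ = q * (κ - s) / (s - 1)) :
    2 * (s - 1) ^ 5 / (q ^ 3 * (κ - 1) ^ 3 * (κ - s) * s) =
      2 * ((s - 1) ^ ((2 : ℝ) / 3) * (κ - s) ^ ((2 : ℝ) / 3)
        / ((κ - 1) * κ ^ ((1 : ℝ) / 6) * η ^ ((1 : ℝ) / 6)) / ψ) ^ 3 := by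
  have : s - 1 ≠ 0 := by linarith
  have : κ - s ≠ 0 := by linarith
  have : κ - 1 ≠ 0 := by linarith
  have : s ≠ 0 := by linarith
  rw [div_pow, div_pow, mul_pow, mul_pow, mul_pow, rpow_two_thirds_pow_three (by linarith),
    rpow_two_thirds_pow_three (by linarith), rpow_one_sixth_pow_three hκ.le,
    rpow_one_sixth_pow_three hη, mul_assoc _ (√κ), ← Real.sqrt_mul hκ.le, ← hsdef, hψ]
  field_simp

end CriticalPoint

/-- The second derivative of `G_V` vanishes at the critical point `ψ_V`, and the
third derivative equals
`2 (√(κη) − 1)^5 / (q^3 (κ−1)^3 (κ − √(κη)) √(κη)) = 2 (f_{η,V} / ψ_V)^3`. -/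
theorem stmt_4 (q κ η : ℝ) (hq : q ∈ Set.Ioo (0:ℝ) 1) (hκ : 1 < κ)
    (hη : η ∈ Set.Ioo κ⁻¹ κ)
    (m f ψ : ℝ) (hm : m = (Real.sqrt κ - Real.sqrt η) ^ 2 / (κ - 1))
    (hf : f = (Real.sqrt (κ * η) - 1) ^ ((2 : ℝ) / 3)
      * (κ - Real.sqrt (κ * η)) ^ ((2 : ℝ) / 3)
      / ((κ - 1) * κ ^ ((1 : ℝ) / 6) * η ^ ((1 : ℝ) / 6)))
    (hψ : ψ = q * (κ - Real.sqrt (κ * η)) / (Real.sqrt (κ * η) - 1))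
    (G : ℂ → ℂ)
    (hG : G = fun z => (η : ℂ) * Complex.log ((κ : ℂ)⁻¹ * z + q)
      - Complex.log (z + q) + (m : ℂ) * Complex.log z) :
    iteratedDeriv 2 G (ψ : ℂ) = 0 ∧
    iteratedDeriv 3 G (ψ : ℂ) =
      ((2 * (Real.sqrt (κ * η) - 1) ^ 5
        / (q ^ 3 * (κ - 1) ^ 3 * (κ - Real.sqrt (κ * η)) * Real.sqrt (κ * η)) : ℝ) : ℂ) ∧
    2 * (Real.sqrt (κ * η) - 1) ^ 5
        / (q ^ 3 * (κ - 1) ^ 3 * (κ - Real.sqrt (κ * η)) * Real.sqrt (κ * η))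
      = 2 * (f / ψ) ^ 3 := by
  have hq0 : 0 < q := hq.1
  have hκ0 : 0 < κ := by linarith
  have hη0 : 0 < η := (inv_pos.2 hκ0).trans hη.1
  obtain ⟨hs1, hsκ⟩ := sqrt_mul_mem_Ioo hκ0 hη
  set s := √(κ * η) with hs
  have hκη : κ * η = s ^ 2 := (Real.sq_sqrt (by positivity)).symm
  have hm' : m = (κ - s) ^ 2 / (κ * (κ - 1)) := by rw [hm, sqrt_sub_sqrt_sq hκ0, div_div]
  have hψ0 : 0 < ψ := by
    rw [hψ]
    exact div_pos (mul_pos hq0 (by linarith)) (by linarith)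
  have hψmem : (ψ : ℂ) ∈ slitPlane := ofReal_mem_slitPlane.2 hψ0
  have hderiv2 := iteratedDeriv_succ_logCombination η m hκ0 hq0.le hψmem 1
  have hderiv3 := iteratedDeriv_succ_logCombination η m hκ0 hq0.le hψmem 2
  norm_num at hderiv2 hderiv3
  rw [show G = logCombination η m κ q from hG, hf]
  refine ⟨?_, ?_, two_mul_pow_five_div_eq_two_mul_cube hq0.ne' hs1 hsκ hκ0 hη0.le hs hψ⟩
  · have h := congrArg ofReal (inv_sq_combination_eq_zero hq0.ne' hs1 hsκ hψ hκη hm')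
    push_cast at h
    rw [hderiv2]
    linear_combination -h
  · rw [hderiv3, ← inv_cube_combination_eq hq0.ne' hs1 hsκ hψ hκη hm']
    push_cast
    ring
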